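/- arXiv:2104.04344 — 4 statements merged into one kernel-verified Lean document; each statement's English description precedes it below -/
import Mathlib

section
/- Let H be a graded connected commutative Hopf algebra over ℚ, with multiplication m, coproduct Δ, and antipode S, and let φ: H → H be a derivation (i.e., φ∘m = m∘(φ⊗id + id⊗φ)). Then the convolution S ⋆ φ := m∘(S⊗φ)∘Δ is an infinitesimal character, i.e., (S⋆φ)∘m = m∘((S⋆φ)⊗ε + ε⊗(S⋆φ)), where ε is the counit. -/
open scoped TensorProduct

/-- Convolution product of linear endomorphisms of a Hopf algebra:
`φ ⋆ ψ = m ∘ (φ ⊗ ψ) ∘ Δ`. -/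
noncomputable def conv {H : Type} [CommRing H] [HopfAlgebra ℚ H]
    (φ ψ : H →ₗ[ℚ] H) : H →ₗ[ℚ] H :=
  LinearMap.mul' ℚ H ∘ₗ TensorProduct.map φ ψ ∘ₗ (Coalgebra.comul (R := ℚ))

/-- The counit viewed as an endomorphism `u ∘ ε : H → H`. -/
noncomputable def epsEndo (H : Type) [CommRing H] [HopfAlgebra ℚ H] : H →ₗ[ℚ] H :=
  Algebra.linearMap ℚ H ∘ₗ (Coalgebra.counit (R := ℚ))

/-!
For commutative `H` the antipode is multiplicative, `S ∘ μ = μ ∘ (S ⊗ S)`, and the multiplication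
`μ : H ⊗ H → H` is both a coalgebra map and an algebra map. The first makes precomposition with `μ`
a convolution homomorphism, the second gives `(μ ∘ (f ⊗ g)) ⋆ (μ ∘ (h ⊗ k)) = μ ∘ ((f ⋆ h) ⊗ (g ⋆ k))`.
Feeding the Leibniz rule `φ ∘ μ = μ ∘ (φ ⊗ id + id ⊗ φ)` through these turns `(S ⋆ φ) ∘ μ` into
`μ ∘ ((S ⋆ φ) ⊗ (S ⋆ id) + (S ⋆ id) ⊗ (S ⋆ φ))`, and `S ⋆ id = u ∘ ε`.
-/

open WithConv TensorProduct

section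
variable {R A C D : Type*} [CommSemiring R] [CommSemiring A] [Algebra R A]
  [AddCommMonoid C] [Module R C] [CoalgebraStruct R C]
  [AddCommMonoid D] [Module R D] [CoalgebraStruct R D]

lemma mul'_comp_map_convMul_mul'_comp_map (f h : WithConv (C →ₗ[R] A))
    (g k : WithConv (D →ₗ[R] A)) :
    toConv (LinearMap.mul' R A ∘ₗ map f.ofConv g.ofConv) *
        toConv (LinearMap.mul' R A ∘ₗ map h.ofConv k.ofConv) =
      toConv (LinearMap.mul' R A ∘ₗ map (f * h).ofConv (g * k).ofConv) := by
  have := LinearMap.algHom_comp_convMul_distrib (Algebra.TensorProduct.lmul' R (S := A))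
    (toConv (map f.ofConv g.ofConv)) (toConv (map h.ofConv k.ofConv))
  rw [TensorProduct.map_convMul_map] at this
  exact WithConv.ext this.symm

end

namespace HopfAlgebra
variable {R H : Type*} [CommSemiring R] [CommSemiring H] [HopfAlgebra R H]

lemma antipode_comp_mul' :
    antipode R ∘ₗ LinearMap.mul' R H = LinearMap.mul' R H ∘ₗ map (antipode R) (antipode R) := by
  ext a b
  simp [antipode_mul_distrib]

theorem antipode_convMul_derivation_comp_mul' (φ : H →ₗ[R] H)
    (hφ : φ ∘ₗ LinearMap.mul' R H =
      LinearMap.mul' R H ∘ₗ (map φ LinearMap.id + map LinearMap.id φ)) :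
    (toConv (antipode R) * toConv φ).ofConv ∘ₗ LinearMap.mul' R H =
      LinearMap.mul' R H ∘ₗ
        (map (toConv (antipode R) * toConv φ).ofConv (1 : WithConv (H →ₗ[R] H)).ofConv +
          map (1 : WithConv (H →ₗ[R] H)).ofConv (toConv (antipode R) * toConv φ).ofConv) := by
  set S := toConv (antipode R (A := H))
  set μ := LinearMap.mul' R H
  have key : toConv ((S * toConv φ).ofConv ∘ₗ μ) =
      toConv (μ ∘ₗ map (S * toConv φ).ofConv (S * toConv LinearMap.id).ofConv) +
        toConv (μ ∘ₗ map (S * toConv LinearMap.id).ofConv (S * toConv φ).ofConv) := calc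
    _ = toConv (antipode R ∘ₗ μ) * toConv (φ ∘ₗ μ) :=
      WithConv.ext (LinearMap.convMul_comp_coalgHom_distrib _ _ (Bialgebra.mulCoalgHom R H))
    _ = toConv (μ ∘ₗ map S.ofConv S.ofConv) *
        (toConv (μ ∘ₗ map φ LinearMap.id) + toConv (μ ∘ₗ map LinearMap.id φ)) := by
      rw [antipode_comp_mul', hφ, LinearMap.comp_add]; rfl
    _ = _ := by
      rw [mul_add, mul'_comp_map_convMul_mul'_comp_map, mul'_comp_map_convMul_mul'_comp_map]
  rw [LinearMap.antipode_mul_id] at key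
  rw [LinearMap.comp_add]
  exact congrArg ofConv key

end HopfAlgebra

theorem antipode_conv_derivation_isInfinitesimalCharacter_general
    {H : Type} [CommRing H] [HopfAlgebra ℚ H]
    (φ : H →ₗ[ℚ] H)
    (hφ : φ ∘ₗ LinearMap.mul' ℚ H =
      LinearMap.mul' ℚ H ∘ₗ
        (TensorProduct.map φ LinearMap.id + TensorProduct.map LinearMap.id φ)) :
    (conv (HopfAlgebra.antipode (R := ℚ)) φ) ∘ₗ LinearMap.mul' ℚ H =
      LinearMap.mul' ℚ H ∘ₗ
        (TensorProduct.map (conv (HopfAlgebra.antipode (R := ℚ)) φ) (epsEndo H) +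
         TensorProduct.map (epsEndo H) (conv (HopfAlgebra.antipode (R := ℚ)) φ)) :=
  HopfAlgebra.antipode_convMul_derivation_comp_mul' φ hφ

/-- If `H` is a graded connected commutative Hopf algebra over `ℚ` and
`φ : H → H` is a derivation, then `S ⋆ φ` is an infinitesimal character. -/
theorem antipode_conv_derivation_isInfinitesimalCharacter
    {H : Type} [CommRing H] [HopfAlgebra ℚ H]
    (𝒜 : ℕ → Submodule ℚ H) [GradedAlgebra 𝒜]
    (hconn : 𝒜 0 = (1 : Submodule ℚ H))
    (hΔ : ∀ n : ℕ, ∀ x ∈ 𝒜 n, (Coalgebra.comul (R := ℚ)) x ∈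
      ⨆ (p : ℕ × ℕ) (_ : p.1 + p.2 = n),
        LinearMap.range (TensorProduct.map (𝒜 p.1).subtype (𝒜 p.2).subtype))
    (φ : H →ₗ[ℚ] H)
    (hφ : φ ∘ₗ LinearMap.mul' ℚ H =
      LinearMap.mul' ℚ H ∘ₗ
        (TensorProduct.map φ LinearMap.id + TensorProduct.map LinearMap.id φ)) :
    (conv (HopfAlgebra.antipode (R := ℚ)) φ) ∘ₗ LinearMap.mul' ℚ H =
      LinearMap.mul' ℚ H ∘ₗ
        (TensorProduct.map (conv (HopfAlgebra.antipode (R := ℚ)) φ) (epsEndo H) +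
         TensorProduct.map (epsEndo H) (conv (HopfAlgebra.antipode (R := ℚ)) φ)) :=
  antipode_conv_derivation_isInfinitesimalCharacter_general φ hφ
end

section
/- Let H be a graded connected commutative Hopf algebra over ℚ, D = S ⋆ Y the Dynkin operator, and Π the operator that is the identity on H₀ and equals Y^{-1}∘D on H_{>0}. Then Π is a projector: Π² = Π. -/
open scoped TensorProduct

/-- The grading operator `Y`, multiplying a homogeneous element of weight `n` by `n`. -/
noncomputable def gradingOp {H : Type} [CommRing H] [Algebra ℚ H]
    (𝒜 : ℕ → Submodule ℚ H) [GradedAlgebra 𝒜] : H →ₗ[ℚ] H :=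
  (DirectSum.toModule ℚ ℕ H fun n => (n : ℚ) • (𝒜 n).subtype) ∘ₗ
    (DirectSum.decomposeLinearEquiv 𝒜).toLinearMap

/-- The Dynkin operator `D = S ⋆ Y`. -/
noncomputable def dynkinOp {H : Type} [CommRing H] [HopfAlgebra ℚ H]
    (𝒜 : ℕ → Submodule ℚ H) [GradedAlgebra 𝒜] : H →ₗ[ℚ] H :=
  conv (HopfAlgebra.antipode (R := ℚ)) (gradingOp 𝒜)

/-- The operator `Π`, equal to the identity on `H₀` and to `Y⁻¹ ∘ D` on `H_{>0}`:
on a homogeneous element `x` of degree `n > 0` it acts as `x ↦ D(x)/n`. -/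
noncomputable def piOp {H : Type} [CommRing H] [HopfAlgebra ℚ H]
    (𝒜 : ℕ → Submodule ℚ H) [GradedAlgebra 𝒜] : H →ₗ[ℚ] H :=
  (DirectSum.toModule ℚ ℕ H fun n =>
      if n = 0 then (𝒜 n).subtype
      else ((n : ℚ)⁻¹ • dynkinOp 𝒜) ∘ₗ (𝒜 n).subtype) ∘ₗ
    (DirectSum.decomposeLinearEquiv 𝒜).toLinearMap

/-!
`H` is commutative, so `S` is multiplicative; `Y` is a derivation; hence `D = S ⋆ Y` satisfies
`D (a * b) = ε(b) D(a) + ε(a) D(b)`. Since `ε` vanishes in positive degrees, `D` kills products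
of elements of positive degree. Associativity of convolution and `id ⋆ S = η ∘ ε` give
`Y = id ⋆ D`, and connectedness puts the coproduct of `x ∈ H_n`, `n > 0`, in the form
`1 ⊗ x + x ⊗ 1 + ∑ x' ⊗ x''` with `x'`, `x''` of positive degree, so
`n x = D x + ∑ x' D(x'')`. By induction on `n` this shows that `D` preserves degrees, and applying
`D` to it gives `D (D x) = n D x`, which is `Π ∘ Π = Π` on `H_n`.
-/

open TensorProduct Coalgebra

section Convolution

variable {H : Type} [CommRing H] [HopfAlgebra ℚ H]

local notation "S" => HopfAlgebra.antipode ℚ (A := H)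

theorem conv_eq_ofConv_mul (φ ψ : H →ₗ[ℚ] H) :
    conv φ ψ = (WithConv.toConv φ * WithConv.toConv ψ).ofConv :=
  rfl

theorem conv_id_conv_antipode (f : H →ₗ[ℚ] H) : conv LinearMap.id (conv S f) = f := by
  simp only [conv_eq_ofConv_mul, WithConv.toConv_ofConv, ← mul_assoc, LinearMap.id_mul_antipode,
    one_mul, WithConv.ofConv_toConv]

theorem conv_antipode_mul_of_derivation {Y : H →ₗ[ℚ] H}
    (hY : ∀ a b, Y (a * b) = Y a * b + a * Y b) (a b : H) :
    conv S Y (a * b) = counit (R := ℚ) b • conv S Y a + counit (R := ℚ) a • conv S Y b := by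
  have hsplit : ∀ a₁ a₂ b₁ b₂ : H, S (a₁ * b₁) * Y (a₂ * b₂) =
      S a₁ * Y a₂ * (S b₁ * b₂) + S a₁ * a₂ * (S b₁ * Y b₂) := by
    intro a₁ a₂ b₁ b₂
    rw [HopfAlgebra.antipode_mul_distrib, hY]
    ring
  simp only [conv_eq_ofConv_mul, ((ℛ ℚ a).mul (ℛ ℚ b)).convMul_apply, (ℛ ℚ a).convMul_apply,
    (ℛ ℚ b).convMul_apply, Repr.mul_left, Repr.mul_right, Repr.mul_index, Finset.sum_product,
    hsplit, Finset.sum_add_distrib, ← Finset.mul_sum, ← Finset.sum_mul,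
    HopfAlgebra.sum_antipode_mul_eq_smul, mul_smul_comm, mul_one, smul_mul_assoc, one_mul,
    ← Finset.smul_sum]

end Convolution

section Counit

variable {R C : Type*} [CommSemiring R] [AddCommMonoid C] [Module R C] [Coalgebra R C]

theorem lift_counit_comul (x : C) : lift (LinearMap.lsmul R C ∘ₗ counit) (comul x) = x :=
  LinearMap.congr_fun lift_lsmul_comp_counit_comp_comul x

theorem lift_counit_comm_comul (x : C) :
    lift (LinearMap.lsmul R C ∘ₗ counit) (TensorProduct.comm R C C (comul x)) = x := by
  have h : lift (LinearMap.lsmul R C ∘ₗ counit) ∘ₗ (TensorProduct.comm R C C).toLinearMap =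
      (TensorProduct.rid R C).toLinearMap ∘ₗ counit.lTensor C := by
    ext a b
    simp
  calc _ = TensorProduct.rid R C (counit.lTensor C (comul x)) := congr($h (comul x))
    _ = x := by simp

end Counit

section Grading

variable {H : Type} [CommRing H] [Algebra ℚ H] (𝒜 : ℕ → Submodule ℚ H) [GradedAlgebra 𝒜]

theorem gradingOp_apply_of_mem {n : ℕ} {x : H} (hx : x ∈ 𝒜 n) :
    gradingOp 𝒜 x = (n : ℚ) • x := by
  simp only [gradingOp, LinearMap.comp_apply, LinearEquiv.coe_toLinearMap,
    DirectSum.decomposeLinearEquiv_apply, DirectSum.decompose_of_mem 𝒜 hx]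
  rw [← DirectSum.lof_eq_of ℚ, DirectSum.toModule_lof]
  simp

theorem gradingOp_mul (a b : H) :
    gradingOp 𝒜 (a * b) = gradingOp 𝒜 a * b + a * gradingOp 𝒜 b := by
  induction a using DirectSum.Decomposition.inductionOn 𝒜 with
  | zero => simp
  | add a a' ha ha' => simp only [add_mul, map_add, ha, ha']; abel
  | homogeneous a =>
    induction b using DirectSum.Decomposition.inductionOn 𝒜 with
    | zero => simp
    | add b b' hb hb' => simp only [mul_add, map_add, hb, hb']; abel
    | homogeneous b =>
      rw [gradingOp_apply_of_mem 𝒜 (SetLike.mul_mem_graded a.2 b.2),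
        gradingOp_apply_of_mem 𝒜 a.2, gradingOp_apply_of_mem 𝒜 b.2, Nat.cast_add, add_smul,
        smul_mul_assoc, mul_smul_comm]

end Grading

section Bidegree

variable {R M : Type*} [CommSemiring R] [AddCommMonoid M] [Module R M] (𝒜 : ℕ → Submodule R M)

theorem range_map_subtype_le {P Q : Submodule R M} {N : Submodule R (M ⊗[R] M)}
    (h : ∀ a ∈ P, ∀ b ∈ Q, a ⊗ₜ[R] b ∈ N) : LinearMap.range (map P.subtype Q.subtype) ≤ N := by
  rw [range_map_eq_span_tmul]
  exact Submodule.span_le.2 fun _ ⟨a, b, ht⟩ => ht ▸ h a a.2 b b.2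

def mixedTensors (n : ℕ) : Submodule R (M ⊗[R] M) :=
  Submodule.span R
    {t | ∃ p q, p + q = n ∧ 0 < p ∧ 0 < q ∧ ∃ a ∈ 𝒜 p, ∃ b ∈ 𝒜 q, a ⊗ₜ[R] b = t}

variable {𝒜}

theorem mixedTensors_le {n : ℕ} {N : Submodule R (M ⊗[R] M)}
    (h : ∀ p q, p + q = n → 0 < p → 0 < q → ∀ a ∈ 𝒜 p, ∀ b ∈ 𝒜 q, a ⊗ₜ[R] b ∈ N) :
    mixedTensors 𝒜 n ≤ N :=
  Submodule.span_le.2 fun _ ⟨p, q, hpq, hp, hq, a, ha, b, hb, ht⟩ =>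
    ht ▸ h p q hpq hp hq a ha b hb

theorem comm_mem_mixedTensors {n : ℕ} {r : M ⊗[R] M} (hr : r ∈ mixedTensors 𝒜 n) :
    TensorProduct.comm R M M r ∈ mixedTensors 𝒜 n := by
  refine mixedTensors_le (N := (mixedTensors 𝒜 n).comap (TensorProduct.comm R M M).toLinearMap)
    (fun p q hpq hp hq a ha b hb => ?_) hr
  exact Submodule.subset_span ⟨q, p, by omega, hq, hp, b, hb, a, ha, rfl⟩

end Bidegree

section Connected

variable {H : Type} [Semiring H] [Bialgebra ℚ H] {𝒜 : ℕ → Submodule ℚ H}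

def ComulRespectsGrading (𝒜 : ℕ → Submodule ℚ H) : Prop :=
  ∀ n : ℕ, ∀ x ∈ 𝒜 n, comul (R := ℚ) x ∈
    ⨆ (p : ℕ × ℕ) (_ : p.1 + p.2 = n), LinearMap.range (map (𝒜 p.1).subtype (𝒜 p.2).subtype)

theorem exists_comul_eq_of_mem (hconn : 𝒜 0 = 1) (hΔ : ComulRespectsGrading 𝒜) {n : ℕ} {x : H}
    (hx : x ∈ 𝒜 n) : ∃ y ∈ 𝒜 n, ∃ z ∈ 𝒜 n, ∃ r ∈ mixedTensors 𝒜 n,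
      comul (R := ℚ) x = 1 ⊗ₜ y + z ⊗ₜ 1 + r := by
  have hle : (⨆ (p : ℕ × ℕ) (_ : p.1 + p.2 = n),
      LinearMap.range (map (𝒜 p.1).subtype (𝒜 p.2).subtype)) ≤
      (𝒜 n).map (mk ℚ H H 1) ⊔ (𝒜 n).map ((mk ℚ H H).flip 1) ⊔ mixedTensors 𝒜 n := by
    refine iSup₂_le ?_
    rintro ⟨p, q⟩ (hpq : p + q = n)
    refine range_map_subtype_le fun a ha b hb => ?_
    rcases Nat.eq_zero_or_pos p with rfl | hp
    · obtain ⟨c, rfl⟩ := Submodule.mem_one.1 (hconn ▸ ha)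
      refine Submodule.mem_sup_left (Submodule.mem_sup_left ⟨c • b, ?_, ?_⟩)
      · exact Submodule.smul_mem _ c (by rwa [← hpq, zero_add])
      · simp [Algebra.algebraMap_eq_smul_one, smul_tmul']
    rcases Nat.eq_zero_or_pos q with rfl | hq
    · obtain ⟨c, rfl⟩ := Submodule.mem_one.1 (hconn ▸ hb)
      refine Submodule.mem_sup_left (Submodule.mem_sup_right ⟨c • a, ?_, ?_⟩)
      · exact Submodule.smul_mem _ c (by rwa [← hpq, add_zero])
      · simp [Algebra.algebraMap_eq_smul_one, smul_tmul']
    exact Submodule.mem_sup_right (Submodule.subset_span ⟨p, q, hpq, hp, hq, a, ha, b, hb, rfl⟩)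
  obtain ⟨_, hyz, r, hr, h⟩ := Submodule.mem_sup.1 (hle (hΔ n x hx))
  obtain ⟨_, ⟨y, hy, rfl⟩, _, ⟨z, hz, rfl⟩, rfl⟩ := Submodule.mem_sup.1 hyz
  exact ⟨y, hy, z, hz, r, hr, by simpa using h.symm⟩

variable [GradedAlgebra 𝒜]

local notation "L" => lift (LinearMap.lsmul ℚ H ∘ₗ counit)

theorem proj_lift_counit_eq_zero {n k : ℕ} (hk : k = 0 ∨ n ≤ k) {r : H ⊗[ℚ] H}
    (hr : r ∈ mixedTensors 𝒜 n) : GradedAlgebra.proj 𝒜 k (L r) = 0 := by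
  refine mixedTensors_le (N := LinearMap.ker (GradedAlgebra.proj 𝒜 k ∘ₗ L))
    (fun p q hpq hp hq a _ b hb => ?_) hr
  simp [GradedAlgebra.proj_apply, DirectSum.decompose_of_mem_ne 𝒜 hb (by omega : q ≠ k)]

theorem eq_and_counit_eq_zero_of_lift_counit_eq {n : ℕ} (hn : 0 < n) {x y z : H}
    {r : H ⊗[ℚ] H} (hx : x ∈ 𝒜 n) (hy : y ∈ 𝒜 n) (hr : r ∈ mixedTensors 𝒜 n)
    (h : L (1 ⊗ₜ y + z ⊗ₜ 1 + r) = x) : y = x ∧ counit (R := ℚ) z = 0 := by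
  have hproj : ∀ k, k = 0 ∨ n ≤ k → GradedAlgebra.proj 𝒜 k x =
      GradedAlgebra.proj 𝒜 k y + counit (R := ℚ) z • GradedAlgebra.proj 𝒜 k 1 := by
    intro k hk
    rw [← h, map_add, map_add, map_add, map_add, proj_lift_counit_eq_zero hk hr, add_zero]
    simp only [lift.tmul, LinearMap.comp_apply, LinearMap.lsmul_apply, Bialgebra.counit_one,
      one_smul, map_smul]
  simp only [GradedAlgebra.proj_apply] at hproj
  have h1 : (1 : H) ∈ 𝒜 0 := SetLike.one_mem_graded 𝒜
  constructor
  · have := hproj n (Or.inr le_rfl)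
    rwa [DirectSum.decompose_of_mem_same 𝒜 hx, DirectSum.decompose_of_mem_same 𝒜 hy,
      DirectSum.decompose_of_mem_ne 𝒜 h1 hn.ne, smul_zero, add_zero, eq_comm] at this
  · have := hproj 0 (Or.inl rfl)
    rw [DirectSum.decompose_of_mem_ne 𝒜 hx hn.ne', DirectSum.decompose_of_mem_ne 𝒜 hy hn.ne',
      DirectSum.decompose_of_mem_same 𝒜 h1, zero_add] at this
    simpa using congr(counit (R := ℚ) $this.symm)

theorem comul_eq_of_mem (hconn : 𝒜 0 = 1) (hΔ : ComulRespectsGrading 𝒜) {n : ℕ} (hn : 0 < n)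
    {x : H} (hx : x ∈ 𝒜 n) :
    ∃ r ∈ mixedTensors 𝒜 n, comul (R := ℚ) x = 1 ⊗ₜ x + x ⊗ₜ 1 + r := by
  obtain ⟨y, hy, z, hz, r, hr, hΔx⟩ := exists_comul_eq_of_mem hconn hΔ hx
  have hyx : y = x := (eq_and_counit_eq_zero_of_lift_counit_eq hn hx hy hr
    (hΔx ▸ lift_counit_comul (R := ℚ) x)).1
  have hzx : z = x := by
    refine (eq_and_counit_eq_zero_of_lift_counit_eq (z := y) hn hx hz
      (comm_mem_mixedTensors hr) ?_).1
    simpa [hΔx, add_comm (counit (R := ℚ) y • (1 : H))] using lift_counit_comm_comul (R := ℚ) x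
  exact ⟨r, hr, by rw [hΔx, hyx, hzx]⟩

theorem counit_eq_zero_of_mem (hconn : 𝒜 0 = 1) (hΔ : ComulRespectsGrading 𝒜) {n : ℕ}
    (hn : 0 < n) {x : H} (hx : x ∈ 𝒜 n) : counit (R := ℚ) x = 0 := by
  obtain ⟨r, hr, hΔx⟩ := comul_eq_of_mem hconn hΔ hn hx
  exact (eq_and_counit_eq_zero_of_lift_counit_eq hn hx hx hr
    (hΔx ▸ lift_counit_comul (R := ℚ) x)).2

end Connected

section Dynkin

variable {H : Type} [CommRing H] [HopfAlgebra ℚ H] {𝒜 : ℕ → Submodule ℚ H} [GradedAlgebra 𝒜]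

theorem dynkinOp_mul (a b : H) :
    dynkinOp 𝒜 (a * b) = counit (R := ℚ) b • dynkinOp 𝒜 a + counit (R := ℚ) a • dynkinOp 𝒜 b :=
  conv_antipode_mul_of_derivation (gradingOp_mul 𝒜) a b

theorem dynkinOp_one : dynkinOp 𝒜 1 = 0 := by
  simpa using dynkinOp_mul (𝒜 := 𝒜) 1 1

theorem smul_eq_dynkinOp_add (hconn : 𝒜 0 = 1) (hΔ : ComulRespectsGrading 𝒜) {n : ℕ}
    (hn : 0 < n) {x : H} (hx : x ∈ 𝒜 n) : ∃ r ∈ mixedTensors 𝒜 n,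
      (n : ℚ) • x = dynkinOp 𝒜 x + LinearMap.mul' ℚ H ((dynkinOp 𝒜).lTensor H r) := by
  obtain ⟨r, hr, hΔx⟩ := comul_eq_of_mem hconn hΔ hn hx
  refine ⟨r, hr, ?_⟩
  rw [← gradingOp_apply_of_mem 𝒜 hx, ← conv_id_conv_antipode (gradingOp 𝒜)]
  change LinearMap.mul' ℚ H ((dynkinOp 𝒜).lTensor H (comul x)) = _
  simp [hΔx, dynkinOp_one]

theorem dynkinOp_mem (hconn : 𝒜 0 = 1) (hΔ : ComulRespectsGrading 𝒜) {n : ℕ} (hn : 0 < n)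
    {x : H} (hx : x ∈ 𝒜 n) : dynkinOp 𝒜 x ∈ 𝒜 n := by
  induction n using Nat.strong_induction_on generalizing x with
  | _ n ih =>
  obtain ⟨r, hr, hx'⟩ := smul_eq_dynkinOp_add hconn hΔ hn hx
  have hr' : LinearMap.mul' ℚ H ((dynkinOp 𝒜).lTensor H r) ∈ 𝒜 n := by
    refine mixedTensors_le (N := (𝒜 n).comap (LinearMap.mul' ℚ H ∘ₗ (dynkinOp 𝒜).lTensor H))
      (fun p q hpq hp hq a ha b hb => ?_) hr
    simpa [← hpq] using SetLike.mul_mem_graded ha (ih q (by omega) hq hb)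
  rw [eq_sub_of_add_eq hx'.symm]
  exact sub_mem (Submodule.smul_mem _ _ hx) hr'

theorem dynkinOp_dynkinOp (hconn : 𝒜 0 = 1) (hΔ : ComulRespectsGrading 𝒜) {n : ℕ}
    (hn : 0 < n) {x : H} (hx : x ∈ 𝒜 n) : dynkinOp 𝒜 (dynkinOp 𝒜 x) = (n : ℚ) • dynkinOp 𝒜 x := by
  obtain ⟨r, hr, hx'⟩ := smul_eq_dynkinOp_add hconn hΔ hn hx
  have hr' : dynkinOp 𝒜 (LinearMap.mul' ℚ H ((dynkinOp 𝒜).lTensor H r)) = 0 := by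
    refine mixedTensors_le
      (N := LinearMap.ker (dynkinOp 𝒜 ∘ₗ LinearMap.mul' ℚ H ∘ₗ (dynkinOp 𝒜).lTensor H))
      (fun p q _ hp hq a ha b hb => ?_) hr
    simp [dynkinOp_mul, counit_eq_zero_of_mem hconn hΔ hp ha,
      counit_eq_zero_of_mem hconn hΔ hq (dynkinOp_mem hconn hΔ hq hb)]
  conv_lhs => rw [eq_sub_of_add_eq hx'.symm]
  rw [map_sub, hr', sub_zero, map_smul]

theorem piOp_apply_of_mem {n : ℕ} {x : H} (hx : x ∈ 𝒜 n) :
    piOp 𝒜 x = if n = 0 then x else (n : ℚ)⁻¹ • dynkinOp 𝒜 x := by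
  simp only [piOp, LinearMap.comp_apply, LinearEquiv.coe_toLinearMap,
    DirectSum.decomposeLinearEquiv_apply, DirectSum.decompose_of_mem 𝒜 hx]
  rw [← DirectSum.lof_eq_of ℚ, DirectSum.toModule_lof]
  split <;> simp

end Dynkin

/-- In a graded connected commutative Hopf algebra over ℚ, the operator `Π`
(identity on `H₀`, `Y⁻¹∘D` on `H_{>0}`) is a projector: `Π² = Π`. -/
theorem piOp_idempotent {H : Type} [CommRing H] [HopfAlgebra ℚ H]
    (𝒜 : ℕ → Submodule ℚ H) [GradedAlgebra 𝒜]
    (hconn : 𝒜 0 = (1 : Submodule ℚ H))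
    (hΔ : ∀ n : ℕ, ∀ x ∈ 𝒜 n, (Coalgebra.comul (R := ℚ)) x ∈
      ⨆ (p : ℕ × ℕ) (_ : p.1 + p.2 = n),
        LinearMap.range (TensorProduct.map (𝒜 p.1).subtype (𝒜 p.2).subtype)) :
    piOp 𝒜 ∘ₗ piOp 𝒜 = piOp 𝒜 := by
  refine LinearMap.ext (DirectSum.Decomposition.inductionOn 𝒜 (by simp) ?_ ?_)
  · intro n x
    rcases Nat.eq_zero_or_pos n with rfl | hn
    · simp [piOp_apply_of_mem x.2]
    have hn' : (n : ℚ) ≠ 0 := by positivity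
    rw [LinearMap.comp_apply, piOp_apply_of_mem x.2, if_neg hn.ne', map_smul,
      piOp_apply_of_mem (dynkinOp_mem hconn hΔ hn x.2), if_neg hn.ne',
      dynkinOp_dynkinOp hconn hΔ hn x.2, smul_smul, smul_smul, mul_assoc, inv_mul_cancel₀ hn',
      mul_one]
  · intro x y hx hy
    rw [map_add, map_add, hx, hy]
end

section
/- For n > 1 and x in the open unit disk with |x| < 1, the single-valued polylogarithm sv(Li_n)(x) := Li_n(x) − (−1)^n ∑_{k=0}^{n−1} (−log|x|²)^k / k! · Li_n−k(conj(x)) satisfies sv(Li_n)(x) = ∑_{k=0}^{n−1} (log^k|x|²)/(k+1)! · P̃_{n−k}(x), where P̃_m(x) := ∑_{ℓ=0}^{m−1} (B_ℓ/ℓ!) · log^ℓ|x|² · (Li_m−ℓ(x) − (−1)^m Li_m−ℓ(conj(x))) and B_ℓ are Bernoulli numbers. -/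
/-!
Write `L = log|x|²`. Expanding every `P̃_{n-k}` and collecting the terms with `k + ℓ = j`, the
coefficient of `L^j Li_{n-j}(x)` is `∑_{k+ℓ=j} B_ℓ / (ℓ! (k+1)!)` and, since
`(-1)^{n-k} = (-1)^ℓ (-1)^{n-k-ℓ}` and `(-1)^ℓ B_ℓ = B'_ℓ`, that of
`(-1)^{n-j} L^j Li_{n-j}(x̄)` is `∑_{k+ℓ=j} B'_ℓ / (ℓ! (k+1)!)`. These are the coefficients of
`t/(e^t - 1) · (e^t - 1)/t = 1` and `t e^t/(e^t - 1) · (e^t - 1)/t = e^t`, i.e. `δ_{j0}` and `1/j!`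
(the Bernoulli recursions `bernoulli_spec'` and `bernoulli'_spec'`), which leaves exactly
`Li_n(x) - (-1)^n ∑_j (-L)^j/j! Li_{n-j}(x̄)`.
-/

open Finset

/-- The classical polylogarithm `Li_n(x) = ∑_{k≥1} x^k/k^n`. -/
noncomputable def Li (n : ℕ) (x : ℂ) : ℂ := ∑' k : ℕ, x ^ (k + 1) / ((k : ℂ) + 1) ^ n

/-- `log|x|²`, as a complex number (via the real logarithm of `|x|²`). -/
noncomputable def logAbsSq (x : ℂ) : ℂ := ((Real.log (Complex.normSq x) : ℝ) : ℂ)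

/-- The single-valued polylogarithm
`sv(Li_n)(x) = Li_n(x) − (−1)^n ∑_{k=0}^{n−1} (−log|x|²)^k/k! · Li_{n−k}(x̄)`. -/
noncomputable def svLi (n : ℕ) (x : ℂ) : ℂ :=
  Li n x - (-1) ^ n * ∑ k ∈ range n,
    (-logAbsSq x) ^ k / (Nat.factorial k : ℂ) * Li (n - k) ((starRingEnd ℂ) x)

/-- `P̃_m(x) = ∑_{ℓ=0}^{m−1} (B_ℓ/ℓ!)·log^ℓ|x|²·(Li_{m−ℓ}(x) − (−1)^m Li_{m−ℓ}(x̄))`. -/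
noncomputable def Ptilde (m : ℕ) (x : ℂ) : ℂ :=
  ∑ ℓ ∈ range m, ((bernoulli ℓ : ℚ) : ℂ) / (Nat.factorial ℓ : ℂ) * logAbsSq x ^ ℓ *
    (Li (m - ℓ) x - (-1) ^ m * Li (m - ℓ) ((starRingEnd ℂ) x))

theorem sum_range_mul_sum_range_sub_eq_sum_antidiagonal {R : Type*} [CommSemiring R]
    (u v c : ℕ → R) (n : ℕ) :
    ∑ k ∈ range n, u k * ∑ ℓ ∈ range (n - k), v ℓ * c (n - k - ℓ) =
      ∑ j ∈ range n, (∑ p ∈ antidiagonal j, u p.1 * v p.2) * c (n - j) := by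
  simp only [mul_sum, sum_mul, sum_sigma']
  refine sum_nbij' (fun x ↦ ⟨x.1 + x.2, (x.1, x.2)⟩) (fun x ↦ ⟨x.2.1, x.2.2⟩) ?_ ?_ ?_ ?_ ?_ <;>
    simp only [mem_sigma, mem_range, HasAntidiagonal.mem_antidiagonal, Sigma.forall, Prod.forall,
      implies_true]
  · lia
  · lia
  · rintro j a b ⟨-, rfl⟩; rfl
  · intro a b _; rw [Nat.sub_sub, mul_assoc]

section BernoulliInversion

open Nat

variable {K : Type*} [Field K]

theorem sum_antidiagonal_pow_div_factorial_succ_mul_div_factorial_mul_pow (L : K) (β : ℕ → ℚ)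
    (j : ℕ) :
    ∑ p ∈ antidiagonal j, L ^ p.1 / (p.1 + 1)! * ((β p.2 : K) / p.2 ! * L ^ p.2) =
      L ^ j * ∑ p ∈ antidiagonal j, (β p.1 : K) / (p.1 ! * (p.2 + 1)!) := by
  rw [← Nat.sum_antidiagonal_swap, mul_sum]
  refine sum_congr rfl fun p hp ↦ ?_
  rw [HasAntidiagonal.mem_antidiagonal] at hp
  rw [← hp, Prod.fst_swap, Prod.snd_swap, pow_add]
  field_simp

variable [CharZero K]

theorem sum_antidiagonal_div_factorial_mul_factorial_succ (f : ℕ → K) (j : ℕ) :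
    ∑ p ∈ antidiagonal j, f p.1 / (p.1 ! * (p.2 + 1)! : K) =
      (∑ p ∈ antidiagonal j, ((p.1 + p.2).choose p.2 : K) / (p.2 + 1) * f p.1) / j ! := by
  rw [sum_div]
  refine sum_congr rfl fun p hp ↦ ?_
  rw [HasAntidiagonal.mem_antidiagonal] at hp
  have : ((p.1 + p.2)! : K) ≠ 0 := Nat.cast_ne_zero.2 (factorial_ne_zero _)
  rw [← hp, ← Nat.choose_symm_add, Nat.cast_add_choose, Nat.factorial_succ]
  push_cast
  field_simp

theorem sum_antidiagonal_bernoulli_div_factorial_mul_factorial_succ (j : ℕ) :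
    ∑ p ∈ antidiagonal j, (bernoulli p.1 : K) / (p.1 ! * (p.2 + 1)! : K) =
      if j = 0 then 1 else 0 := by
  have h := congrArg (Rat.cast : ℚ → K) (bernoulli_spec' j)
  push_cast at h
  refine (sum_antidiagonal_div_factorial_mul_factorial_succ (fun i ↦ (bernoulli i : K)) j).trans ?_
  rw [h]
  split_ifs with hj <;> simp [hj]

theorem sum_antidiagonal_bernoulli'_div_factorial_mul_factorial_succ (j : ℕ) :
    ∑ p ∈ antidiagonal j, (bernoulli' p.1 : K) / (p.1 ! * (p.2 + 1)! : K) = 1 / j ! := by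
  have h := congrArg (Rat.cast : ℚ → K) (bernoulli'_spec' j)
  push_cast at h
  exact (sum_antidiagonal_div_factorial_mul_factorial_succ (fun i ↦ (bernoulli' i : K)) j).trans
    (by rw [h])

theorem sum_pow_div_factorial_succ_mul_sum_bernoulli (L : K) (a : ℕ → K) {n : ℕ} (hn : 1 ≤ n) :
    ∑ k ∈ range n, L ^ k / (k + 1)! *
      ∑ ℓ ∈ range (n - k), (bernoulli ℓ : K) / ℓ ! * L ^ ℓ * a (n - k - ℓ) = a n := by
  rw [sum_range_mul_sum_range_sub_eq_sum_antidiagonal]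
  simp only [sum_antidiagonal_pow_div_factorial_succ_mul_div_factorial_mul_pow,
    sum_antidiagonal_bernoulli_div_factorial_mul_factorial_succ]
  rw [sum_eq_single_of_mem 0 (mem_range.2 hn) fun j _ hj ↦ by simp [hj]]
  simp

theorem sum_pow_div_factorial_succ_mul_sum_bernoulli' (L : K) (a : ℕ → K) (n : ℕ) :
    ∑ k ∈ range n, L ^ k / (k + 1)! *
      ∑ ℓ ∈ range (n - k), (bernoulli' ℓ : K) / ℓ ! * L ^ ℓ * a (n - k - ℓ) =
        ∑ k ∈ range n, L ^ k / k ! * a (n - k) := by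
  rw [sum_range_mul_sum_range_sub_eq_sum_antidiagonal]
  simp only [sum_antidiagonal_pow_div_factorial_succ_mul_div_factorial_mul_pow,
    sum_antidiagonal_bernoulli'_div_factorial_mul_factorial_succ, mul_one_div]

theorem sub_neg_one_pow_mul_sum_eq_sum_mul_sum_bernoulli (L : K) (a b : ℕ → K) {n : ℕ}
    (hn : 1 ≤ n) :
    a n - (-1) ^ n * ∑ k ∈ range n, (-L) ^ k / k ! * b (n - k) =
      ∑ k ∈ range n, L ^ k / (k + 1)! * ∑ ℓ ∈ range (n - k), (bernoulli ℓ : K) / ℓ ! * L ^ ℓ *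
        (a (n - k - ℓ) - (-1) ^ (n - k) * b (n - k - ℓ)) := by
  have split_sign (m : ℕ) :
      ∑ ℓ ∈ range m, (bernoulli ℓ : K) / ℓ ! * L ^ ℓ * (a (m - ℓ) - (-1) ^ m * b (m - ℓ)) =
        ∑ ℓ ∈ range m, (bernoulli ℓ : K) / ℓ ! * L ^ ℓ * a (m - ℓ) -
          ∑ ℓ ∈ range m, (bernoulli' ℓ : K) / ℓ ! * L ^ ℓ * ((-1) ^ (m - ℓ) * b (m - ℓ)) := by
    rw [← sum_sub_distrib]
    refine sum_congr rfl fun ℓ hℓ ↦ ?_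
    rw [bernoulli'_eq_bernoulli, ← Nat.add_sub_cancel' (mem_range.1 hℓ).le, pow_add,
      Nat.add_sub_cancel_left]
    push_cast
    ring
  have neg_one_pow_mul_sum :
      (-1) ^ n * ∑ k ∈ range n, (-L) ^ k / k ! * b (n - k) =
        ∑ k ∈ range n, L ^ k / k ! * ((-1) ^ (n - k) * b (n - k)) := by
    rw [mul_sum]
    refine sum_congr rfl fun k hk ↦ ?_
    have hsq : (-1 : K) ^ k * (-1) ^ k = 1 := by rw [← mul_pow]; norm_num
    rw [neg_pow, ← Nat.sub_add_cancel (mem_range.1 hk).le, pow_add, Nat.add_sub_cancel]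
    linear_combination (L ^ k / k ! * (-1) ^ (n - k) * b (n - k)) * hsq
  simp_rw [split_sign, mul_sub, sum_sub_distrib]
  rw [sum_pow_div_factorial_succ_mul_sum_bernoulli L a hn,
    sum_pow_div_factorial_succ_mul_sum_bernoulli' L (fun m ↦ (-1) ^ m * b m), neg_one_pow_mul_sum]

end BernoulliInversion

theorem svLi_eq_sum_Ptilde_general (n : ℕ) (hn : 1 < n) (x : ℂ) :
    svLi n x = ∑ k ∈ range n,
      logAbsSq x ^ k / (Nat.factorial (k + 1) : ℂ) * Ptilde (n - k) x :=
  sub_neg_one_pow_mul_sum_eq_sum_mul_sum_bernoulli (logAbsSq x) (Li · x)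
    (Li · ((starRingEnd ℂ) x)) hn.le

/-- For `n > 1` and `0 < |x| < 1`, the single-valued polylogarithm satisfies
`sv(Li_n)(x) = ∑_{k=0}^{n−1} log^k|x|²/(k+1)! · P̃_{n−k}(x)`. -/
theorem svLi_eq_sum_Ptilde (n : ℕ) (hn : 1 < n) (x : ℂ) (hx0 : x ≠ 0)
    (hx : ‖x‖ < 1) :
    svLi n x = ∑ k ∈ range n,
      logAbsSq x ^ k / (Nat.factorial (k + 1) : ℂ) * Ptilde (n - k) x :=
  svLi_eq_sum_Ptilde_general n hn x
end

section
/- For any linear map f from words to a ℚ-vector space vanishing on nontrivial shuffle products, and any word w = x₁⋯x_n of length n ≥ 1, one has f(x_n⋯x₁) = (−1)^{n+1} f(x₁⋯x_n). -/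
/-- The list of all shuffles (interleavings) of two words. -/
def shuffles {X : Type} : List X → List X → List (List X)
  | [], ys => [ys]
  | x :: xs, [] => [x :: xs]
  | x :: xs, y :: ys =>
      (shuffles xs (y :: ys)).map (x :: ·) ++ (shuffles (x :: xs) ys).map (y :: ·)
termination_by u v => u.length + v.length

/-- The shuffle product of two words, as an element of the free ℚ-vector space on words. -/
noncomputable def shufProd {X : Type} (u v : List X) : List X →₀ ℚ :=
  ((shuffles u v).map fun w => Finsupp.single w (1 : ℚ)).sum

lemma shufProd_nil_left {X : Type} (v : List X) :
    shufProd [] v = Finsupp.single v 1 := by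
  simp [shufProd, shuffles]

lemma shufProd_nil_right {X : Type} (u : List X) :
    shufProd u [] = Finsupp.single u 1 := by
  cases u <;> simp [shufProd, shuffles]

lemma mapDomain_sum_singles {X : Type} (x : X) (l : List (List X)) :
    Finsupp.mapDomain (x :: ·) ((l.map fun w => Finsupp.single w (1 : ℚ)).sum)
      = (l.map fun w => Finsupp.single (x :: w) (1 : ℚ)).sum := by
  induction l with
  | nil => simp
  | cons a l ih => simp [Finsupp.mapDomain_add, Finsupp.mapDomain_single, ih]

lemma mapDomain_shufProd {X : Type} (x : X) (u v : List X) :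
    Finsupp.mapDomain (x :: ·) (shufProd u v)
      = ((shuffles u v).map fun w => Finsupp.single (x :: w) (1 : ℚ)).sum := by
  rw [shufProd, mapDomain_sum_singles]

lemma shufProd_cons_cons {X : Type} (x y : X) (u v : List X) :
    shufProd (x :: u) (y :: v)
      = Finsupp.mapDomain (x :: ·) (shufProd u (y :: v))
        + Finsupp.mapDomain (y :: ·) (shufProd (x :: u) v) := by
  rw [mapDomain_shufProd, mapDomain_shufProd, shufProd, shuffles]
  simp [List.map_map, Function.comp_def]

lemma key {X : Type} {M : Type} [AddCommGroup M] [Module ℚ M]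
    (f : (List X →₀ ℚ) →ₗ[ℚ] M)
    (hf : ∀ u v : List X, u ≠ [] → v ≠ [] → f (shufProd u v) = 0) :
    ∀ (b a : List X) (x : X),
      f (Finsupp.mapDomain (x :: ·) (shufProd a.reverse b))
        = (-1 : ℚ) ^ b.length • f (Finsupp.single ((a ++ x :: b).reverse) 1) := by
  intro b
  induction b with
  | nil =>
      intro a x
      simp [shufProd_nil_right, Finsupp.mapDomain_single, List.reverse_append]
  | cons y b ih =>
      intro a x
      have h0 := hf (x :: a.reverse) (y :: b) (by simp) (by simp)
      rw [shufProd_cons_cons, map_add] at h0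
      have h1 : f (Finsupp.mapDomain (x :: ·) (shufProd a.reverse (y :: b)))
          = - f (Finsupp.mapDomain (y :: ·) (shufProd (x :: a.reverse) b)) :=
        eq_neg_of_add_eq_zero_left h0
      have hx : (a ++ [x]).reverse = x :: a.reverse := by simp
      rw [h1, ← hx, ih (a ++ [x]) y]
      have hl : (a ++ [x]) ++ y :: b = a ++ x :: y :: b := by simp
      rw [hl]
      rw [← neg_smul]
      congr 1
      simp [pow_succ]

/-- Any linear map `f` on the free ℚ-vector space of words that vanishes on all
nontrivial shuffle products satisfies `f(x_n⋯x_1) = (−1)^{n+1} f(x_1⋯x_n)` for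
every word of length `n ≥ 1`. -/
theorem reversal_of_mod_products_map {X : Type} {M : Type} [AddCommGroup M] [Module ℚ M]
    (f : (List X →₀ ℚ) →ₗ[ℚ] M)
    (hf : ∀ u v : List X, u ≠ [] → v ≠ [] → f (shufProd u v) = 0)
    (w : List X) (hw : w ≠ []) :
    f (Finsupp.single w.reverse (1 : ℚ)) =
      (-1 : ℚ) ^ (w.length + 1) • f (Finsupp.single w (1 : ℚ)) := by
  obtain ⟨x, t, rfl⟩ := List.exists_cons_of_ne_nil hw
  have h := key f hf t [] x
  simp only [List.reverse_nil, shufProd_nil_left, Finsupp.mapDomain_single,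
    List.nil_append] at h
  -- h : f (single (x :: t) 1) = (-1)^t.length • f (single ((x :: t).reverse) 1)
  have h2 : f (Finsupp.single ((x :: t).reverse) 1)
      = (-1 : ℚ) ^ t.length • f (Finsupp.single (x :: t) 1) := by
    rw [h, smul_smul, ← pow_add]
    have : (-1 : ℚ) ^ (t.length + t.length) = 1 := by
      rw [← two_mul, pow_mul]; norm_num
    rw [this, one_smul]
  rw [h2]
  congr 1
  have : (x :: t).length + 1 = t.length + 2 := by simp
  rw [this, pow_add]
  norm_num
end
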